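/- arXiv:cs/0602029 — 4 statements merged into one kernel-verified Lean document; each statement's English description precedes it below -/
import Mathlib

section
/- Let (S,d) be a metric space, q a query point, and B a finite set of points each with a positive weight, such that all weights in B lie in a half-open interval [a, a(1+ε/2)) for some a > 0 and 0 < ε < 1. If k ∈ B satisfies (1-ε/2)·d(q,f') ≤ d(q,k) for all f' ∈ B (i.e., k is an (ε/2)-approximate unweighted farthest neighbor), then for all f ∈ B we have w(f)·d(q,f) ≤ (1/(1-ε))·w(k)·d(q,k); equivalently (1-ε)·w(f)·d(q,f) ≤ w(k)·d(q,k). -/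
theorem bucket_approx_weighted {S : Type*} [MetricSpace S]
    (q : S) (B : Finset S) (w : S → ℝ) (a ε : ℝ)
    (ha : 0 < a) (hε0 : 0 < ε) (hε1 : ε < 1)
    (hw : ∀ p ∈ B, a ≤ w p ∧ w p < a * (1 + ε / 2))
    (hwpos : ∀ p ∈ B, 0 < w p)
    (k : S) (hk : k ∈ B)
    (hkfar : ∀ f' ∈ B, (1 - ε / 2) * dist q f' ≤ dist q k) :
    ∀ f ∈ B, (1 - ε) * (w f * dist q f) ≤ w k * dist q k := by
  intro f hf
  obtain ⟨hfa, hfb⟩ := hw f hf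
  obtain ⟨hka, hkb⟩ := hw k hk
  have hfar := hkfar f hf
  have hd : (0:ℝ) ≤ dist q f := dist_nonneg
  have hdk : (0:ℝ) ≤ dist q k := dist_nonneg
  nlinarith [mul_nonneg hd hε0.le, mul_nonneg hdk hε0.le, mul_nonneg (mul_nonneg hd hε0.le) hε0.le]
end

section
/- Let (S,d) be a metric space, 0 < ε < 1, q, p₁, f, r ∈ S with weights w(f), w(r) > 0 and w(p₁) = 1. Suppose d(p₁, f) ≥ (2/ε)·d(p₁, q), d(p₁, r) ≥ (2/ε)·d(p₁, q), and w(r)·d(p₁, r) ≥ w(f)·d(p₁, f). Then w(r)·d(q, r) ≥ (1 - ε)·w(f)·d(q, f). -/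
theorem outside_ball_approx {S : Type*} [MetricSpace S]
    (q p₁ f r : S) (w : S → ℝ) (ε : ℝ)
    (hε0 : 0 < ε) (hε1 : ε < 1)
    (hwf : 0 < w f) (hwr : 0 < w r) (hwp₁ : w p₁ = 1)
    (hf : dist p₁ f ≥ (2 / ε) * dist p₁ q)
    (hr : dist p₁ r ≥ (2 / ε) * dist p₁ q)
    (hfar : w r * dist p₁ r ≥ w f * dist p₁ f) :
    w r * dist q r ≥ (1 - ε) * (w f * dist q f) := by
  have h2e : (2 / ε) * dist p₁ q * (ε / 2) = dist p₁ q := by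
    field_simp
  have hqf : dist p₁ q ≤ (ε / 2) * dist p₁ f := by
    nlinarith [mul_le_mul_of_nonneg_right hf (by positivity : (0:ℝ) ≤ ε / 2)]
  have hqr : dist p₁ q ≤ (ε / 2) * dist p₁ r := by
    nlinarith [mul_le_mul_of_nonneg_right hr (by positivity : (0:ℝ) ≤ ε / 2)]
  have tf : dist q f ≤ dist p₁ q + dist p₁ f := by
    rw [dist_comm p₁ q]; exact dist_triangle q p₁ f
  have tr : dist p₁ r ≤ dist p₁ q + dist q r := dist_triangle p₁ q r
  have hdf : (0:ℝ) ≤ dist p₁ f := dist_nonneg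
  have hdr : (0:ℝ) ≤ dist p₁ r := dist_nonneg
  -- dqf ≤ (1+ε/2) dpf, dqr ≥ (1-ε/2) dpr
  have h1 : dist q f ≤ (1 + ε / 2) * dist p₁ f := by linarith
  have h2 : (1 - ε / 2) * dist p₁ r ≤ dist q r := by linarith
  have key : (1 - ε/2) * (w f * dist p₁ f) ≤ w r * dist q r := by
    nlinarith [mul_le_mul_of_nonneg_left h2 hwr.le]
  have h3 : (1 - ε) * (w f * dist q f) ≤ (1 - ε) * (w f * ((1 + ε / 2) * dist p₁ f)) :=
    mul_le_mul_of_nonneg_left (mul_le_mul_of_nonneg_left h1 hwf.le) (by linarith)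
  nlinarith [mul_nonneg (mul_nonneg (sq_nonneg ε) hwf.le) hdf, key]
end

section
/- Let c, p_i, p_j be points in ℝ^D with p_i ≠ p_j, and suppose the dilation δ(c, p_i, p_j) = (|p_i c| + |p_j c|) / |p_i p_j| satisfies δ(c, p_i, p_j) ≥ Γ where Γ = 2/ε − 1 for some 0 < ε < 1. If |p_i c| ≥ |p_j c|, then |p_j c| ≥ (1 − ε)·|p_i c|. -/
theorem similar_legs {D : ℕ} (c pi pj : EuclideanSpace ℝ (Fin D))
    (hne : pi ≠ pj) (ε : ℝ) (hε0 : 0 < ε) (hε1 : ε < 1)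
    (hdil : (dist pi c + dist pj c) / dist pi pj ≥ 2 / ε - 1)
    (hlegs : dist pi c ≥ dist pj c) :
    dist pj c ≥ (1 - ε) * dist pi c := by
  have hd : 0 < dist pi pj := dist_pos.mpr hne
  have htri : dist pi c ≤ dist pi pj + dist pj c := dist_triangle pi pj c
  have hmul : (2 / ε - 1) * dist pi pj ≤ dist pi c + dist pj c :=
    (le_div_iff₀ hd).mp hdil
  have hε : (1:ℝ) ≤ 2 / ε := by rw [le_div_iff₀ hε0]; linarith
  have key : (2 / ε - 1) * (dist pi c - dist pj c) ≤ dist pi c + dist pj c :=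
    le_trans (mul_le_mul_of_nonneg_left (by linarith) (by linarith)) hmul
  have he2 : ε * (2 / ε) = 2 := by field_simp
  nlinarith [mul_le_mul_of_nonneg_left key (le_of_lt hε0), he2, dist_nonneg (x := pi) (y := c)]
end

section
/- Let c, p_i, p_j ∈ ℝ^D with p_i ≠ p_j, let q = (p_i + p_j)/2 be their midpoint and w = 2/|p_i p_j|. Suppose |p_i c| ≥ |p_j c| and δ(c,p_i,p_j) = (|p_i c| + |p_j c|)/|p_i p_j| ≥ 2/ε − 1 for some 0 < ε < 1. Then w·|q c| ≥ (1 − ε)·δ(c, p_i, p_j). -/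
/-!
By Apollonius, `4 |q c|² = 2 a² + 2 b² - d² ≥ (a + b)² - d²` with `a = |p_i c|`, `b = |p_j c|`,
`d = |p_i p_j|`, so `w |q c| ≥ √(δ² - 1)`. Once `δ ≥ 2/ε - 1`, this is at least `(1 - ε) δ`,
because `ε (2 - ε) δ² ≥ (2 - ε)³ / ε ≥ 1`.
-/

open EuclideanGeometry

section

variable {V P : Type*} [NormedAddCommGroup V] [InnerProductSpace ℝ V] [MetricSpace P]
  [NormedAddTorsor V P]

theorem sq_dist_add_dist_sub_sq_dist_le_sq_two_mul_dist_midpoint (p q c : P) :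
    (dist p c + dist q c) ^ 2 - dist p q ^ 2 ≤ (2 * dist (midpoint ℝ p q) c) ^ 2 := by
  have apollonius := dist_sq_add_dist_sq_eq_two_mul_dist_midpoint_sq_add_half_dist_sq c p q
  rw [dist_comm c p, dist_comm c q, dist_comm c] at apollonius
  nlinarith [sq_nonneg (dist p c - dist q c)]

end

theorem sq_one_sub_mul_le_sq_sub_one {ε δ : ℝ} (hε0 : 0 < ε) (hε1 : ε < 1) (hδ : 2 / ε - 1 ≤ δ) :
    ((1 - ε) * δ) ^ 2 ≤ δ ^ 2 - 1 := by
  have hεδ : 2 - ε ≤ ε * δ := by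
    rw [div_sub_one hε0.ne', div_le_iff₀ hε0] at hδ
    linarith
  have hsq : (2 - ε) ^ 2 ≤ (ε * δ) ^ 2 := pow_le_pow_left₀ (by linarith) hεδ 2
  have hcube : ε ≤ (2 - ε) ^ 3 := by nlinarith
  nlinarith [mul_le_mul_of_nonneg_left hsq (by linarith : 0 ≤ 2 - ε)]

theorem midpoint_weighted_approx_general {D : ℕ} (c pi pj : EuclideanSpace ℝ (Fin D))
    (hne : pi ≠ pj) (ε : ℝ) (hε0 : 0 < ε) (hε1 : ε < 1)
    (hdil : (dist pi c + dist pj c) / dist pi pj ≥ 2 / ε - 1) :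
    (2 / dist pi pj) * dist (midpoint ℝ pi pj) c
      ≥ (1 - ε) * ((dist pi c + dist pj c) / dist pi pj) := by
  have hd : 0 < dist pi pj := dist_pos.mpr hne
  have hsq : ((1 - ε) * ((dist pi c + dist pj c) / dist pi pj)) ^ 2
      ≤ (2 / dist pi pj * dist (midpoint ℝ pi pj) c) ^ 2 :=
    calc _ ≤ ((dist pi c + dist pj c) / dist pi pj) ^ 2 - 1 :=
          sq_one_sub_mul_le_sq_sub_one hε0 hε1 hdil
      _ = ((dist pi c + dist pj c) ^ 2 - dist pi pj ^ 2) / dist pi pj ^ 2 := by field_simp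
      _ ≤ (2 * dist (midpoint ℝ pi pj) c) ^ 2 / dist pi pj ^ 2 := by
          gcongr
          exact sq_dist_add_dist_sub_sq_dist_le_sq_two_mul_dist_midpoint pi pj c
      _ = _ := by ring
  exact le_of_sq_le_sq hsq (by positivity)

theorem midpoint_weighted_approx {D : ℕ} (c pi pj : EuclideanSpace ℝ (Fin D))
    (hne : pi ≠ pj) (ε : ℝ) (hε0 : 0 < ε) (hε1 : ε < 1)
    (hlegs : dist pi c ≥ dist pj c)
    (hdil : (dist pi c + dist pj c) / dist pi pj ≥ 2 / ε - 1) :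
    (2 / dist pi pj) * dist (midpoint ℝ pi pj) c
      ≥ (1 - ε) * ((dist pi c + dist pj c) / dist pi pj) :=
  midpoint_weighted_approx_general c pi pj hne ε hε0 hε1 hdil
end
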